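/- Suppose μ is a singular cardinal of cofinality θ, ⟨μᵢ : i < θ⟩ is an increasing sequence of regular cardinals converging to μ with μ₀ strongly compact and μ₀ > θ, Λ is a μ⁺-directed partial order with no maximal element, and 𝒯 is a Λ-tree with |T_u| ≤ μ for all u ∈ Λ. If 𝒯 admits a narrow subsystem as in the Magidor–Shelah claim — that is, there is a cofinal Γ ⊆ Λ and nonempty S_u ⊆ T_u for u ∈ Γ such that ⟨⟨S_u : u ∈ Γ⟩, {<_𝒯↾⋃S_u}⟩ is a Γ-system with width less than some strongly compact cardinal μᵢ — then 𝒯 has a cofinal branch. -/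

import Mathlib

/-!
Statement 13: If μ is a singular limit of an increasing sequence ⟨μᵢ : i < θ⟩ of
regular cardinals with μ₀ strongly compact and μ₀ > θ = cf(μ), Λ is a
μ⁺-directed partial order with no maximal element, 𝒯 is a Λ-tree with levels of
size ≤ μ, and 𝒯 admits a narrow cofinal subsystem of width less than some
strongly compact μᵢ, then 𝒯 has a cofinal branch.
-/

universe u

open Cardinal

/-- `Λ` is `κ`-directed: every subset of size `< κ` has an upper bound. -/
def IsDir (Λ : Type u) [Preorder Λ] (κ : Cardinal.{u}) : Prop :=
  ∀ s : Set Λ, #s < κ → ∃ ub : Λ, ∀ x ∈ s, x ≤ ub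

/-- `⟨⟨S_u⟩, ℛ⟩` is a `Λ`-system, where the level of `x : σ` is `ℓ x` (so the
levels `S_u = ℓ ⁻¹' {u}` are automatically pairwise disjoint) and the set of
relations is `{R i | i : ι}`. -/
structure IsLSystem {Λ : Type u} [Preorder Λ] {σ ι : Type u}
    (ℓ : σ → Λ) (R : ι → σ → σ → Prop) : Prop where
  lvl_ne : ∀ u : Λ, ∃ x : σ, ℓ x = u
  idx_ne : Nonempty ι
  trans : ∀ i : ι, Transitive (R i)
  lt_lvl : ∀ (i : ι) (x y : σ), R i x y → ℓ x < ℓ y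
  treelike : ∀ (i : ι) (x y z : σ), R i x z → R i y z → ℓ x ≤ ℓ y → (R i x y ∨ x = y)
  complete : ∀ ⦃u v : Λ⦄, u < v → ∃ (i : ι) (x y : σ), ℓ x = u ∧ ℓ y = v ∧ R i x y

/-- The width of a system: `max(sup_u |S_u|, |ℛ|)`. -/
noncomputable def sysWidth {Λ : Type u} [Preorder Λ] {σ ι : Type u}
    (ℓ : σ → Λ) (_R : ι → σ → σ → Prop) : Cardinal.{u} :=
  max (⨆ u : Λ, #{x : σ // ℓ x = u}) #ι

/-- `x` and `y` are compatible with respect to the relation `r`. -/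
def SysCompat {σ : Type u} (r : σ → σ → Prop) (x y : σ) : Prop :=
  ∃ z : σ, (r x z ∨ x = z) ∧ (r y z ∨ y = z)

/-- `b` is a branch through the relation `r`: pairwise compatible. -/
def IsSysBranch {σ : Type u} (r : σ → σ → Prop) (b : Set σ) : Prop :=
  ∀ x ∈ b, ∀ y ∈ b, SysCompat r x y

/-- The system has a cofinal branch through one of its relations. -/
def HasCofBranch {Λ : Type u} [Preorder Λ] {σ ι : Type u}
    (ℓ : σ → Λ) (R : ι → σ → σ → Prop) : Prop :=
  ∃ (i : ι) (b : Set σ), IsSysBranch (R i) b ∧ ∀ u : Λ, ∃ x ∈ b, u ≤ ℓ x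


/-- `F` is a `κ`-complete filter: closed under intersections of `< κ` members. -/
def IsKComplete {α : Type u} (κ : Cardinal.{u}) (F : Filter α) : Prop :=
  ∀ s : Set (Set α), #s < κ → (∀ t ∈ s, t ∈ F) → ⋂₀ s ∈ F

/-- `κ` is strongly compact: every `κ`-complete filter (on any set) extends to a
`κ`-complete ultrafilter. -/
def IsStronglyCompact (κ : Cardinal.{u}) : Prop :=
  ∀ (α : Type u) (F : Filter α), F.NeBot → IsKComplete κ F →
    ∃ U : Ultrafilter α, (U : Filter α) ≤ F ∧ IsKComplete κ (U : Filter α)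

/-- `𝒯 = (⟨T_u : u ∈ Λ⟩, <_𝒯)` is a `Λ`-tree, where `T_u = ℓ ⁻¹' {u}`. -/
structure IsLTree {Λ : Type u} [Preorder Λ] {τ : Type u}
    (ℓ : τ → Λ) (tlt : τ → τ → Prop) : Prop where
  lvl_ne : ∀ u : Λ, ∃ t : τ, ℓ t = u
  trans : Transitive tlt
  lt_lvl : ∀ x y : τ, tlt x y → ℓ x < ℓ y
  treelike : ∀ x y z : τ, tlt x z → tlt y z → ℓ x < ℓ y → tlt x y
  restrict : ∀ (u : Λ) (t : τ), u ≤ ℓ t → ∃! s : τ, ℓ s = u ∧ (tlt s t ∨ s = t)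

/-!
Extend the filter of final segments of `Λ` restricted to `Γ` to a `μᵢ`-complete ultrafilter `U`;
this uses strong compactness and the `μ⁺`-directedness of `Λ`. Call a node good if it has
extensions in the subsystem on a `U`-large set of levels. Good nodes are closed downwards; they
exist on every level, since by `μᵢ`-completeness one node of a narrow level `S_u` serves almost
all higher levels; and each level has at most width-many of them, because `μᵢ` is a strong limit.
On every level, the `U`-limit of the restrictions of good nodes from higher levels is then a
good node, and these limits cohere into a cofinal branch.
-/

open Filter Set

section CompleteFilters

variable {α β : Type u} {κ : Cardinal.{u}}

theorem IsStronglyCompact.exists_ultrafilter (hsc : IsStronglyCompact κ) (F : Filter α)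
    [F.NeBot] [CardinalInterFilter F κ] :
    ∃ U : Ultrafilter α, ↑U ≤ F ∧ CardinalInterFilter (U : Filter α) κ :=
  let ⟨U, hUF, hU⟩ := hsc α F ‹_› CardinalInterFilter.cardinal_sInter_mem
  ⟨U, hUF, ⟨hU⟩⟩

theorem Ultrafilter.exists_eventually_of_eventually_exists_mem {U : Ultrafilter α}
    [CardinalInterFilter (U : Filter α) κ] {S : Set β} (hS : #S < κ) {R : α → β → Prop}
    (h : ∀ᶠ a in U, ∃ b ∈ S, R a b) : ∃ b ∈ S, ∀ᶠ a in U, R a b := by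
  by_contra! hne
  have hnot : ∀ᶠ a in U, ∀ b : S, ¬R a b :=
    (eventually_cardinal_forall hS).2 fun b => hne b b.2
  obtain ⟨a, ⟨b, hb, hR⟩, hnR⟩ := (h.and hnot).exists
  exact hnR ⟨b, hb⟩ hR

theorem IsStronglyCompact.two_power_lt (hsc : IsStronglyCompact κ) (hκ : κ.IsRegular)
    {ν : Cardinal.{u}} (hν : ν < κ) : 2 ^ ν < κ := by
  induction ν using Cardinal.inductionOn with | mk L => ?_
  rw [← mk_set]
  by_contra! hle
  have : (cocardinal (Set L) hκ).NeBot := by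
    simpa using (cocardinal_inf_principal_neBot_iff (s := univ)).2 (by simpa using hle)
  obtain ⟨U, hU, _⟩ := hsc.exists_ultrafilter (cocardinal (Set L) hκ)
  -- `U` is nonprincipal, yet `κ`-completeness makes it concentrate on the single set `A`.
  set A : Set L := {x | ∀ᶠ B in (U : Filter (Set L)), x ∈ B}
  have hA : ∀ᶠ B in U, B = A := by
    refine ((eventually_cardinal_forall hν).2 fun x => ?_).mono fun B hB => Set.ext hB
    by_cases hx : x ∈ A
    · exact (show ∀ᶠ B in (U : Filter (Set L)), x ∈ B from hx).mono fun B hB => iff_of_true hB hx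
    · exact (Ultrafilter.eventually_not.2 hx).mono fun B hB => iff_of_false hB hx
  obtain ⟨B, hBA, hB⟩ := (hA.and (hU (eventually_cocardinal_ne A))).exists
  exact hB hBA

end CompleteFilters

section Directed

variable {Λ : Type u} [Preorder Λ] {κ : Cardinal.{u}}

theorem IsDir.mono {κ' : Cardinal.{u}} (h : IsDir Λ κ) (hκ : κ' ≤ κ) : IsDir Λ κ' :=
  fun s hs => h s (hs.trans_le hκ)

theorem IsDir.nonempty (h : IsDir Λ κ) (hκ : 0 < κ) : Nonempty Λ :=
  let ⟨a, _⟩ := h ∅ (by simpa using hκ)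
  ⟨a⟩

theorem IsDir.isDirectedOrder (h : IsDir Λ κ) (hκ : 2 < κ) : IsDirectedOrder Λ where
  directed a b := by
    obtain ⟨c, hc⟩ := h {a, b} ((mk_insert_le.trans (by simp [one_add_one_eq_two])).trans_lt hκ)
    exact ⟨c, hc a (by simp), hc b (by simp)⟩

theorem IsDir.cardinalInterFilter_atTop [Nonempty Λ] [IsDirectedOrder Λ] (h : IsDir Λ κ) :
    CardinalInterFilter (atTop : Filter Λ) κ where
  cardinal_sInter_mem S hS hmem := by
    choose a ha using fun s hs => mem_atTop_sets.1 (hmem s hs)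
    obtain ⟨c, hc⟩ := h (range fun s : S => a s s.2) (mk_range_le.trans_lt hS)
    exact mem_atTop_sets.2 ⟨c, fun b hcb s hs => ha s hs b ((hc _ ⟨⟨s, hs⟩, rfl⟩).trans hcb)⟩

end Directed

namespace IsLTree

variable {Λ τ : Type u} [PartialOrder Λ] {ℓ : τ → Λ} {tlt : τ → τ → Prop}

theorem trans_or_eq (htree : IsLTree ℓ tlt) {r s t : τ} (hrs : tlt r s ∨ r = s)
    (hst : tlt s t ∨ s = t) : tlt r t ∨ r = t := by
  rcases hst with hst | rfl
  · rcases hrs with hrs | rfl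
    exacts [.inl (htree.trans hrs hst), .inl hst]
  · exact hrs

variable (htree : IsLTree ℓ tlt) {u v : Λ} {s t : τ}

open Classical in
/-- The restriction `t↾u`; it is a junk value `t` unless `u ≤ ℓ t`. -/
noncomputable def restr (u : Λ) (t : τ) : τ :=
  if hu : u ≤ ℓ t then (htree.restrict u t hu).exists.choose else t

theorem level_restr_and (hu : u ≤ ℓ t) :
    ℓ (htree.restr u t) = u ∧ (tlt (htree.restr u t) t ∨ htree.restr u t = t) := by
  rw [restr, dif_pos hu]
  exact (htree.restrict u t hu).exists.choose_spec

theorem level_restr (hu : u ≤ ℓ t) : ℓ (htree.restr u t) = u :=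
  (htree.level_restr_and hu).1

theorem restr_tlt_or_eq (hu : u ≤ ℓ t) : tlt (htree.restr u t) t ∨ htree.restr u t = t :=
  (htree.level_restr_and hu).2

theorem restr_eq_of (hu : u ≤ ℓ t) (hs : ℓ s = u) (hst : tlt s t ∨ s = t) :
    htree.restr u t = s :=
  (htree.restrict u t hu).unique (htree.level_restr_and hu) ⟨hs, hst⟩

theorem restr_restr (huv : u ≤ v) (hv : v ≤ ℓ t) :
    htree.restr u (htree.restr v t) = htree.restr u t := by
  have hu : u ≤ ℓ (htree.restr v t) := (htree.level_restr hv).symm ▸ huv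
  exact (htree.restr_eq_of (huv.trans hv) (htree.level_restr hu)
    (htree.trans_or_eq (htree.restr_tlt_or_eq hu) (htree.restr_tlt_or_eq hv))).symm

theorem restr_tlt (hu : u < ℓ t) : tlt (htree.restr u t) t :=
  (htree.restr_tlt_or_eq hu.le).resolve_right fun h =>
    hu.ne (h ▸ htree.level_restr hu.le).symm

theorem restr_mem {P : Set τ} (hP : ∀ ⦃s t⦄, tlt s t → t ∈ P → s ∈ P) (hu : u ≤ ℓ t)
    (ht : t ∈ P) : htree.restr u t ∈ P :=
  (htree.restr_tlt_or_eq hu).elim (hP · ht) fun h => h.symm ▸ ht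

end IsLTree

section Branch

def EventuallyExtends {Λ τ : Type u} (U : Filter Λ) (ℓ : τ → Λ) (tlt : τ → τ → Prop)
    (SS : Set τ) (t : τ) : Prop :=
  ∀ᶠ v in U, ∃ s ∈ SS, ℓ s = v ∧ tlt t s

variable {Λ τ : Type u} [PartialOrder Λ] {ℓ : τ → Λ} {tlt : τ → τ → Prop} {κ : Cardinal.{u}}
  {U : Ultrafilter Λ} [CardinalInterFilter (U : Filter Λ) κ]

theorem EventuallyExtends.of_tlt {F : Filter Λ} {SS : Set τ} {s t : τ} (htree : IsLTree ℓ tlt)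
    (ht : EventuallyExtends F ℓ tlt SS t) (hst : tlt s t) : EventuallyExtends F ℓ tlt SS s :=
  ht.mono fun _ ⟨r, hr, hrv, htr⟩ => ⟨r, hr, hrv, htree.trans hst htr⟩

theorem IsLTree.card_eventuallyExtends_le (htree : IsLTree ℓ tlt) {SS : Set τ} {W : Cardinal.{u}}
    (hW : Order.succ W < κ) (hwidth : ∀ᶠ v in (U : Filter Λ), #{s // s ∈ SS ∧ ℓ s = v} ≤ W)
    (u : Λ) : #{t // EventuallyExtends (U : Filter Λ) ℓ tlt SS t ∧ ℓ t = u} ≤ W := by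
  by_contra! hlt
  obtain ⟨A, hA, hAcard⟩ := le_mk_iff_exists_subset.1 (Order.succ_le_of_lt hlt)
  have hext : ∀ᶠ v in (U : Filter Λ), ∀ a : A, ∃ s ∈ SS, ℓ s = v ∧ tlt a s :=
    (eventually_cardinal_forall (hAcard ▸ hW)).2 fun a => (hA a.2).1
  obtain ⟨v, hv, hext⟩ := (hwidth.and hext).exists
  choose s hsSS hsv hts using hext
  -- a node of level `u` is determined by any node above it
  have hinj : Function.Injective fun a : A => (⟨s a, hsSS a, hsv a⟩ : {s // s ∈ SS ∧ ℓ s = v}) := by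
    intro a b hab
    have hab : s a = s b := congrArg Subtype.val hab
    have hu : u ≤ ℓ (s a) := (hA a.2).2 ▸ (htree.lt_lvl _ _ (hts a)).le
    exact Subtype.ext <| (htree.restrict u (s a) hu).unique ⟨(hA a.2).2, .inl (hts a)⟩
      ⟨(hA b.2).2, .inl (hab ▸ hts b)⟩
  exact (Order.lt_succ W).not_ge (hAcard ▸ (mk_le_of_injective hinj).trans hv)

theorem IsLTree.exists_branch_of_ultrafilter (htree : IsLTree ℓ tlt)
    (hU : (U : Filter Λ) ≤ atTop) {P : Set τ} (hP_down : ∀ ⦃s t⦄, tlt s t → t ∈ P → s ∈ P)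
    (hP_ne : ∀ u, ∃ t ∈ P, ℓ t = u)
    (hP_small : ∀ u, #{t // t ∈ P ∧ ℓ t = u} < κ) :
    ∃ b : Λ → τ, (∀ u, ℓ (b u) = u) ∧ ∀ ⦃u v⦄, u < v → tlt (b u) (b v) := by
  have hcone : ∀ u, ∀ᶠ v in (U : Filter Λ), u ≤ v := fun u => (eventually_ge_atTop u).filter_mono hU
  choose top htopP htopℓ using hP_ne
  have hle_top : ∀ {u v}, u ≤ v → u ≤ ℓ (top v) := fun huv => (htopℓ _).symm ▸ huv
  -- `b u` is the `U`-limit of the restrictions of `top v` to level `u`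
  have hlim : ∀ u, ∃ c ∈ {t | t ∈ P ∧ ℓ t = u},
      ∀ᶠ v in (U : Filter Λ), htree.restr u (top v) = c := fun u =>
    U.exists_eventually_of_eventually_exists_mem (hP_small u) <| (hcone u).mono fun v huv =>
      ⟨_, ⟨htree.restr_mem hP_down (hle_top huv) (htopP v), htree.level_restr (hle_top huv)⟩, rfl⟩
  choose b hb hbU using hlim
  refine ⟨b, fun u => (hb u).2, fun u v huv => ?_⟩
  obtain ⟨w, hwu, hwv, hvw⟩ := ((hbU u).and ((hbU v).and (hcone v))).exists
  have hcoh : htree.restr u (b v) = b u := by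
    rw [← hwv, htree.restr_restr huv.le (hle_top hvw), hwu]
  exact hcoh ▸ htree.restr_tlt ((hb v).2.symm ▸ huv)

theorem IsLTree.exists_branch_of_eventually_narrow (htree : IsLTree ℓ tlt)
    (hU : (U : Filter Λ) ≤ atTop) {SS : Set τ} {W : Cardinal.{u}} (hW : Order.succ W < κ)
    (hwidth : ∀ᶠ v in (U : Filter Λ), #{s // s ∈ SS ∧ ℓ s = v} ≤ W)
    (hlinked : ∀ᶠ u in (U : Filter Λ), ∀ᶠ v in (U : Filter Λ),
      ∃ t ∈ SS, ∃ s ∈ SS, ℓ t = u ∧ ℓ s = v ∧ tlt t s) :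
    ∃ b : Λ → τ, (∀ u, ℓ (b u) = u) ∧ ∀ ⦃u v⦄, u < v → tlt (b u) (b v) := by
  have hWκ : W < κ := (Order.le_succ W).trans_lt hW
  set P := {t | EventuallyExtends (U : Filter Λ) ℓ tlt SS t}
  have hP_down : ∀ ⦃s t⦄, tlt s t → t ∈ P → s ∈ P := fun _ _ hst ht => ht.of_tlt htree hst
  have hP_ne : ∀ᶠ u in (U : Filter Λ), ∃ t ∈ P, ℓ t = u := by
    refine (hwidth.and hlinked).mono fun u ⟨hwu, hlu⟩ => ?_
    obtain ⟨t, ⟨-, htu⟩, ht⟩ := U.exists_eventually_of_eventually_exists_mem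
      (S := {t | t ∈ SS ∧ ℓ t = u}) (R := fun v t => ∃ s ∈ SS, ℓ s = v ∧ tlt t s)
      (hwu.trans_lt hWκ)
      (hlu.mono fun v ⟨t, ht, s, hs, htu, hsv, hts⟩ => ⟨t, ⟨ht, htu⟩, s, hs, hsv, hts⟩)
    exact ⟨t, ht, htu⟩
  refine htree.exists_branch_of_ultrafilter hU hP_down (fun u => ?_)
    fun u => (htree.card_eventuallyExtends_le hW hwidth u).trans_lt hWκ
  obtain ⟨v, ⟨t, htP, htv⟩, huv⟩ := (hP_ne.and ((eventually_ge_atTop u).filter_mono hU)).exists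
  have hu : u ≤ ℓ t := htv ▸ huv
  exact ⟨htree.restr u t, htree.restr_mem hP_down hu htP, htree.level_restr hu⟩

end Branch

theorem stmt13_general {Λ : Type u} [PartialOrder Λ]
    (μ θ : Cardinal.{u})
    (μs : Ordinal.{u} → Cardinal.{u})
    (hμs_reg : ∀ i : Ordinal.{u}, i < θ.ord → (μs i).IsRegular)
    (hμs_lt : ∀ i : Ordinal.{u}, i < θ.ord → μs i < μ)
    (hnomax : ∀ u : Λ, ∃ v : Λ, u < v)
    (hdir : IsDir Λ (Order.succ μ))
    {τ : Type u} (ℓT : τ → Λ) (tlt : τ → τ → Prop)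
    (htree : IsLTree ℓT tlt)
    -- 𝒯 admits a narrow cofinal subsystem of width < some strongly compact μᵢ:
    (hsub : ∃ Γ : Set Λ, (∀ u : Λ, ∃ v ∈ Γ, u ≤ v) ∧
      ∃ SS : Set τ,
        (∀ t ∈ SS, ℓT t ∈ Γ) ∧
        (∀ u ∈ Γ, ∃ t ∈ SS, ℓT t = u) ∧
        (∀ u ∈ Γ, ∀ v ∈ Γ, u < v →
          ∃ t ∈ SS, ∃ s ∈ SS, ℓT t = u ∧ ℓT s = v ∧ tlt t s) ∧
        ∃ i : Ordinal.{u}, i < θ.ord ∧ IsStronglyCompact (μs i) ∧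
          (⨆ u : Γ, #{t : τ // t ∈ SS ∧ ℓT t = (u : Λ)}) < μs i) :
    ∃ b : Λ → τ, (∀ u : Λ, ℓT (b u) = u) ∧
      ∀ ⦃u v : Λ⦄, u < v → tlt (b u) (b v) := by
  obtain ⟨Γ, hΓ, SS, -, -, hlinked, i, hi, hsc, hW⟩ := hsub
  have hκ : (μs i).IsRegular := hμs_reg i hi
  have hdirκ : IsDir Λ (μs i) := hdir.mono ((hμs_lt i hi).le.trans (Order.le_succ μ))
  have : Nonempty Λ := hdirκ.nonempty hκ.pos
  have : IsDirectedOrder Λ := hdirκ.isDirectedOrder (hκ.nat_lt 2)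
  have : NoMaxOrder Λ := ⟨hnomax⟩
  have : CardinalInterFilter (atTop : Filter Λ) (μs i) := hdirκ.cardinalInterFilter_atTop
  have : (atTop ⊓ 𝓟 Γ).NeBot := frequently_mem_iff_neBot.1 (frequently_atTop.2 fun u =>
    (hΓ u).imp fun _ ⟨hv, huv⟩ => ⟨huv, hv⟩)
  obtain ⟨U, hUΓ, _⟩ := hsc.exists_ultrafilter (atTop ⊓ 𝓟 Γ)
  have hUtop : (U : Filter Λ) ≤ atTop := hUΓ.trans inf_le_left
  have hΓU : ∀ᶠ v in (U : Filter Λ), v ∈ Γ := hUΓ (mem_inf_of_right (mem_principal_self Γ))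
  refine htree.exists_branch_of_eventually_narrow hUtop
    ((Order.succ_le_of_lt (cantor _)).trans_lt (hsc.two_power_lt hκ hW))
    (hΓU.mono fun v hv => le_ciSup bddAbove_of_small (⟨v, hv⟩ : Γ)) ?_
  exact hΓU.mono fun u hu => (hΓU.and ((eventually_gt_atTop u).filter_mono hUtop)).mono
    fun v ⟨hv, huv⟩ => hlinked u hu v hv huv

theorem stmt13 {Λ : Type u} [PartialOrder Λ]
    (μ θ : Cardinal.{u}) (hθ : θ = (μ.ord).cof) (hμinf : ℵ₀ ≤ μ) (hsing : θ < μ)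
    (μs : Ordinal.{u} → Cardinal.{u})
    (hμs_mono : ∀ ⦃i j : Ordinal.{u}⦄, i < j → j < θ.ord → μs i < μs j)
    (hμs_reg : ∀ i : Ordinal.{u}, i < θ.ord → (μs i).IsRegular)
    (hμs_lt : ∀ i : Ordinal.{u}, i < θ.ord → μs i < μ)
    (hμs_conv : ∀ ν : Cardinal.{u}, ν < μ → ∃ i : Ordinal.{u}, i < θ.ord ∧ ν ≤ μs i)
    (hsc₀ : IsStronglyCompact (μs 0)) (hθμ₀ : θ < μs 0)
    (hnomax : ∀ u : Λ, ∃ v : Λ, u < v)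
    (hdir : IsDir Λ (Order.succ μ))
    {τ : Type u} (ℓT : τ → Λ) (tlt : τ → τ → Prop)
    (htree : IsLTree ℓT tlt)
    (hlvl : ∀ u : Λ, #{t : τ // ℓT t = u} ≤ μ)
    -- 𝒯 admits a narrow cofinal subsystem of width < some strongly compact μᵢ:
    (hsub : ∃ Γ : Set Λ, (∀ u : Λ, ∃ v ∈ Γ, u ≤ v) ∧
      ∃ SS : Set τ,
        (∀ t ∈ SS, ℓT t ∈ Γ) ∧
        (∀ u ∈ Γ, ∃ t ∈ SS, ℓT t = u) ∧
        (∀ u ∈ Γ, ∀ v ∈ Γ, u < v →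
          ∃ t ∈ SS, ∃ s ∈ SS, ℓT t = u ∧ ℓT s = v ∧ tlt t s) ∧
        ∃ i : Ordinal.{u}, i < θ.ord ∧ IsStronglyCompact (μs i) ∧
          (⨆ u : Γ, #{t : τ // t ∈ SS ∧ ℓT t = (u : Λ)}) < μs i) :
    ∃ b : Λ → τ, (∀ u : Λ, ℓT (b u) = u) ∧
      ∀ ⦃u v : Λ⦄, u < v → tlt (b u) (b v) :=
  stmt13_general μ θ μs hμs_reg hμs_lt hnomax hdir ℓT tlt htree hsub
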